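/- arXiv:1706.06478 — 2 statements merged into one kernel-verified Lean document; each statement's English description precedes it below -/
import Mathlib

section
/- Let p_f : ℝ → EuclideanSpace ℝ (Fin 3) be twice differentiable in a neighborhood of s₀ with ‖p_f'(s)‖ = 1 for all s, suppose k(s) := ‖p_f''(s)‖ ≠ 0 for all s in a neighborhood of s₀, and suppose n(s) := p_f''(s)/k(s) is differentiable at s₀. Let R_SF(s) denote the 3×3 matrix with columns t(s), n(s), b(s). Then R_SF is differentiable at s₀ and R_SF'(s₀) = R_SF(s₀) · M, where M is the matrix with rows (0, −k(s₀), 0), (k(s₀), 0, −τ(s₀)), (0, τ(s₀), 0) and τ(s₀) := ⟪b(s₀), n'(s₀)⟫ (the Serret–Frenet matrix differential equation). -/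
open scoped RealInnerProductSpace Matrix

/-- Cross product on `EuclideanSpace ℝ (Fin 3)`. -/
noncomputable def cross3 (u v : EuclideanSpace ℝ (Fin 3)) : EuclideanSpace ℝ (Fin 3) :=
  (WithLp.equiv 2 (Fin 3 → ℝ)).symm
    ![u 1 * v 2 - u 2 * v 1, u 2 * v 0 - u 0 * v 2, u 0 * v 1 - u 1 * v 0]

/-- Tangent vector of an arc-length parameterized curve. -/
noncomputable def tang (p_f : ℝ → EuclideanSpace ℝ (Fin 3)) (s : ℝ) : EuclideanSpace ℝ (Fin 3) :=
  deriv p_f s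

/-- Curvature. -/
noncomputable def curv (p_f : ℝ → EuclideanSpace ℝ (Fin 3)) (s : ℝ) : ℝ :=
  ‖deriv (deriv p_f) s‖

/-- Normal vector. -/
noncomputable def nor (p_f : ℝ → EuclideanSpace ℝ (Fin 3)) (s : ℝ) : EuclideanSpace ℝ (Fin 3) :=
  (curv p_f s)⁻¹ • deriv (deriv p_f) s

/-- Binormal vector. -/
noncomputable def binor (p_f : ℝ → EuclideanSpace ℝ (Fin 3)) (s : ℝ) : EuclideanSpace ℝ (Fin 3) :=
  cross3 (tang p_f s) (nor p_f s)

/-- Torsion: `τ(s) = ⟪b(s), n'(s)⟫`. -/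
noncomputable def tors (p_f : ℝ → EuclideanSpace ℝ (Fin 3)) (s : ℝ) : ℝ :=
  ⟪binor p_f s, deriv (nor p_f) s⟫

/-- The Serret–Frenet matrix, whose columns are the tangent, normal and binormal vectors. -/
noncomputable def RSF (p_f : ℝ → EuclideanSpace ℝ (Fin 3)) (s : ℝ) : Matrix (Fin 3) (Fin 3) ℝ :=
  Matrix.of fun i j => ![tang p_f s, nor p_f s, binor p_f s] j i

attribute [local instance] Matrix.normedAddCommGroup Matrix.normedSpace

/-!
Unit speed gives `⟪t, t'⟫ = 0`, and `t' = k n`, so `(t, n, t × n)` is an orthonormal frame near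
`s₀`. For any differentiable orthonormal frame `(e₀, e₁, e₂)` with matrix `R`, expanding each `e_j'`
in the frame gives `R' = R Ω` with `Ω_kj = ⟪e_k, e_j'⟫`, and differentiating `⟪e_i, e_j⟫ = δ_ij`
shows that `Ω` is skew-symmetric. Here the first column of `Ω` is `(0, k, 0)` because `t' = k n`,
`Ω₂₁ = ⟪b, n'⟫ = τ`, and skew-symmetry determines the remaining entries.
-/

open Filter Topology

theorem Orthonormal.sum_inner_smul_eq {𝕜 E ι : Type*} [RCLike 𝕜] [NormedAddCommGroup E]
    [InnerProductSpace 𝕜 E] [FiniteDimensional 𝕜 E] [Fintype ι] {v : ι → E}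
    (hv : Orthonormal 𝕜 v) (hcard : Fintype.card ι = Module.finrank 𝕜 E) (x : E) :
    ∑ i, inner 𝕜 (v i) x • v i = x := by
  simpa using (OrthonormalBasis.mk hv
    (hv.linearIndependent.span_eq_top_of_card_eq_finrank' hcard).ge).sum_repr' x

theorem HasDerivAt.inner_add_inner_eq_zero_of_eventually_const {E : Type*}
    [NormedAddCommGroup E] [InnerProductSpace ℝ E] {f g : ℝ → E} {f' g' : E} {x c : ℝ}
    (hf : HasDerivAt f f' x) (hg : HasDerivAt g g' x) (hc : ∀ᶠ s in 𝓝 x, ⟪f s, g s⟫ = c) :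
    ⟪f x, g'⟫ + ⟪f', g x⟫ = 0 :=
  (hf.inner ℝ hg).unique ((hasDerivAt_const x c).congr_of_eventuallyEq hc)

theorem inner_deriv_eq_neg_of_eventually_orthonormal {E ι : Type*} [NormedAddCommGroup E]
    [InnerProductSpace ℝ E] {e : ℝ → ι → E} {x : ℝ}
    (hd : ∀ i, DifferentiableAt ℝ (fun s => e s i) x) (ho : ∀ᶠ s in 𝓝 x, Orthonormal ℝ (e s))
    (i j : ι) :
    ⟪e x i, deriv (fun s => e s j) x⟫ = -⟪e x j, deriv (fun s => e s i) x⟫ := by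
  classical
  have hc : ∀ᶠ s in 𝓝 x, ⟪e s i, e s j⟫ = if i = j then 1 else 0 :=
    ho.mono fun s hs => orthonormal_iff_ite.mp hs i j
  have h := (hd i).hasDerivAt.inner_add_inner_eq_zero_of_eventually_const (hd j).hasDerivAt hc
  rw [real_inner_comm (e x j)] at h
  linarith

theorem hasDerivAt_matrix_of_orthonormal_columns {n : Type*} [Fintype n]
    {e : ℝ → n → EuclideanSpace ℝ n} {x : ℝ}
    (hd : ∀ j, DifferentiableAt ℝ (fun s => e s j) x) (ho : Orthonormal ℝ (e x)) :
    HasDerivAt (fun s => Matrix.of fun i j => e s j i)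
      (Matrix.of (fun i j => e x j i) *
        Matrix.of fun k j => ⟪e x k, deriv (fun s => e s j) x⟫) x := by
  refine hasDerivAt_pi.mpr fun i => hasDerivAt_pi.mpr fun j => ?_
  have hcoord : HasDerivAt (fun s => e s j i) (deriv (fun s => e s j) x i) x :=
    (EuclideanSpace.proj i (𝕜 := ℝ)).hasFDerivAt.comp_hasDerivAt x (hd j).hasDerivAt
  refine hcoord.congr_deriv ?_
  have hexpand := congrArg (· i) (ho.sum_inner_smul_eq (by simp) (deriv (fun s => e s j) x))
  simp only [WithLp.ofLp_sum, WithLp.ofLp_smul, Finset.sum_apply, Pi.smul_apply, smul_eq_mul]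
    at hexpand
  simp [← hexpand, Matrix.mul_apply, mul_comm]

theorem cross3_eq_toLp_crossProduct (u v : EuclideanSpace ℝ (Fin 3)) :
    cross3 u v = WithLp.toLp 2 (u.ofLp ⨯₃ v.ofLp) := by
  ext i
  fin_cases i <;> simp [cross3, cross_apply]

theorem orthonormal_cross3 {u v : EuclideanSpace ℝ (Fin 3)} (h : Orthonormal ℝ ![u, v]) :
    Orthonormal ℝ ![u, v, cross3 u v] := by
  simp_rw [orthonormal_iff_ite, EuclideanSpace.inner_eq_star_dotProduct, star_trivial] at h ⊢
  have huu := h 0 0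
  have hvv := h 1 1
  have hvu := h 1 0
  simp only [Fin.isValue, Matrix.cons_val_zero, Matrix.cons_val_one, Matrix.cons_val_fin_one,
    ↓reduceIte, one_ne_zero] at huu hvv hvu
  intro i j
  fin_cases i <;> fin_cases j <;>
    simp [cross3_eq_toLp_crossProduct, dot_self_cross, dot_cross_self, cross_dot_cross, huu, hvv,
      hvu, dotProduct_comm]

theorem DifferentiableAt.cross3 {f g : ℝ → EuclideanSpace ℝ (Fin 3)} {x : ℝ}
    (hf : DifferentiableAt ℝ f x) (hg : DifferentiableAt ℝ g x) :
    DifferentiableAt ℝ (fun s => cross3 (f s) (g s)) x := by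
  rw [differentiableAt_euclidean] at hf hg ⊢
  intro i
  fin_cases i <;> simp [cross3_eq_toLp_crossProduct, cross_apply] <;> fun_prop

theorem curv_smul_nor {p_f : ℝ → EuclideanSpace ℝ (Fin 3)} {s : ℝ} (hk : curv p_f s ≠ 0) :
    curv p_f s • nor p_f s = deriv (deriv p_f) s := by
  rw [nor, smul_smul, mul_inv_cancel₀ hk, one_smul]

theorem orthonormal_tang_nor {p_f : ℝ → EuclideanSpace ℝ (Fin 3)} {s : ℝ}
    (hunit : ∀ s, ‖deriv p_f s‖ = 1) (hd : DifferentiableAt ℝ (deriv p_f) s)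
    (hk : curv p_f s ≠ 0) : Orthonormal ℝ ![tang p_f s, nor p_f s] := by
  have htt' : ⟪deriv p_f s, deriv (deriv p_f) s⟫ = 0 := by
    have h := hd.hasDerivAt.inner_add_inner_eq_zero_of_eventually_const hd.hasDerivAt
      (Eventually.of_forall fun u => by rw [real_inner_self_eq_norm_sq, hunit, one_pow])
    rw [real_inner_comm (deriv p_f s)] at h
    linarith
  have htn : ⟪deriv p_f s, nor p_f s⟫ = 0 := by
    rw [nor, real_inner_smul_right, htt', mul_zero]
  have hnn : ‖nor p_f s‖ = 1 := by
    rw [nor, norm_smul, norm_inv, curv, norm_norm]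
    exact inv_mul_cancel₀ hk
  rw [orthonormal_iff_ite]
  intro i j
  fin_cases i <;> fin_cases j <;> simp [tang, hunit, hnn, htn, real_inner_comm (deriv p_f s)]

theorem serret_frenet_matrix_ode_general
    (p_f : ℝ → EuclideanSpace ℝ (Fin 3)) (s₀ : ℝ)
    (hd2 : ∀ᶠ s in nhds s₀, DifferentiableAt ℝ (deriv p_f) s)
    (hunit : ∀ s : ℝ, ‖deriv p_f s‖ = 1)
    (hk : ∀ᶠ s in nhds s₀, curv p_f s ≠ 0)
    (hn : DifferentiableAt ℝ (nor p_f) s₀) :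
    DifferentiableAt ℝ (RSF p_f) s₀ ∧
      deriv (RSF p_f) s₀ =
        RSF p_f s₀ *
          !![0, -(curv p_f s₀), 0;
             curv p_f s₀, 0, -(tors p_f s₀);
             0, tors p_f s₀, 0] := by
  set e : ℝ → Fin 3 → EuclideanSpace ℝ (Fin 3) := fun s => ![tang p_f s, nor p_f s, binor p_f s]
  have hframe : ∀ᶠ s in 𝓝 s₀, Orthonormal ℝ (e s) := by
    filter_upwards [hd2, hk] with s hds hks
    exact orthonormal_cross3 (orthonormal_tang_nor hunit hds hks)
  have hd (j : Fin 3) : DifferentiableAt ℝ (fun s => e s j) s₀ := by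
    have ht : DifferentiableAt ℝ (tang p_f) s₀ := hd2.self_of_nhds
    fin_cases j
    exacts [ht, hn, ht.cross3 hn]
  have hR := hasDerivAt_matrix_of_orthonormal_columns hd hframe.self_of_nhds
  have hskew := inner_deriv_eq_neg_of_eventually_orthonormal hd hframe
  have hcol0 (k : Fin 3) :
      ⟪e s₀ k, deriv (fun s => e s 0) s₀⟫ = curv p_f s₀ * if k = 1 then 1 else 0 := by
    rw [show (fun s => e s 0) = deriv p_f from rfl, ← curv_smul_nor hk.self_of_nhds,
      real_inner_smul_right]
    exact congrArg _ (orthonormal_iff_ite.mp hframe.self_of_nhds k 1)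
  have hdiag (k : Fin 3) : ⟪e s₀ k, deriv (fun s => e s k) s₀⟫ = 0 := by
    linarith [hskew k k]
  have htors : ⟪e s₀ 2, deriv (fun s => e s 1) s₀⟫ = tors p_f s₀ := rfl
  refine ⟨hR.differentiableAt, hR.deriv.trans (congrArg _ ?_)⟩
  ext k j
  fin_cases k <;> fin_cases j <;> simp [hcol0, hdiag, htors, hskew 0 1, hskew 0 2, hskew 1 2]

theorem serret_frenet_matrix_ode
    (p_f : ℝ → EuclideanSpace ℝ (Fin 3)) (s₀ : ℝ)
    (hd1 : ∀ᶠ s in nhds s₀, DifferentiableAt ℝ p_f s)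
    (hd2 : ∀ᶠ s in nhds s₀, DifferentiableAt ℝ (deriv p_f) s)
    (hunit : ∀ s : ℝ, ‖deriv p_f s‖ = 1)
    (hk : ∀ᶠ s in nhds s₀, curv p_f s ≠ 0)
    (hn : DifferentiableAt ℝ (nor p_f) s₀) :
    DifferentiableAt ℝ (RSF p_f) s₀ ∧
      deriv (RSF p_f) s₀ =
        RSF p_f s₀ *
          !![0, -(curv p_f s₀), 0;
             curv p_f s₀, 0, -(tors p_f s₀);
             0, tors p_f s₀, 0] :=
  serret_frenet_matrix_ode_general p_f s₀ hd2 hunit hk hn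
end

section
/- Let p_f : ℝ → EuclideanSpace ℝ (Fin 3) be twice differentiable near s₀ := s_f(t₀) with ‖p_f'(s)‖ = 1 for all s and k(s) := ‖p_f''(s)‖ ≠ 0 for s near s₀, and suppose n(s) := p_f''(s)/k(s) is differentiable at s₀. Let p : ℝ → ℝ³ be differentiable at t₀ with v(t₀) := p'(t₀), let s_f : ℝ → ℝ be differentiable at t₀, and assume the transversality condition ⟪t(s_f(t)), p(t) − p_f(s_f(t))⟫ = 0 holds for all t in a neighborhood of t₀. Then the transverse coordinate w₁ is differentiable at t₀ and w₁'(t₀) = ⟪n(s₀), v(t₀)⟫ + τ(s₀) s_f'(t₀) w₂(t₀), where τ(s₀) := ⟪b(s₀), n'(s₀)⟫. -/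
open scoped RealInnerProductSpace Matrix

/-- First transverse coordinate `w₁(t) = ⟪n(s_f(t)), p(t) − p_f(s_f(t))⟫`. -/
noncomputable def w1 (p_f p : ℝ → EuclideanSpace ℝ (Fin 3)) (s_f : ℝ → ℝ) (t : ℝ) : ℝ :=
  ⟪nor p_f (s_f t), p t - p_f (s_f t)⟫

/-- Second transverse coordinate `w₂(t) = ⟪b(s_f(t)), p(t) − p_f(s_f(t))⟫`. -/
noncomputable def w2 (p_f p : ℝ → EuclideanSpace ℝ (Fin 3)) (s_f : ℝ → ℝ) (t : ℝ) : ℝ :=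
  ⟪binor p_f (s_f t), p t - p_f (s_f t)⟫

/-!
Differentiate `w₁ = ⟪n ∘ s_f, p - p_f ∘ s_f⟫` by the product and chain rules. The term
`-s_f' ⟪n, t⟫` vanishes because `t` has unit length, so `t' ⟂ t`. For the term
`s_f' ⟪n', p - p_f⟫`, expand `⟪n', p - p_f⟫` in the orthonormal frame `t, n, b`: the `t`-component
of `p - p_f` vanishes by transversality and `⟪n, n'⟫ = 0` because `n` has unit length near `s₀`,
leaving `⟪b, n'⟫ ⟪b, p - p_f⟫ = τ w₂`.
-/

open Filter Topology

theorem HasDerivAt.inner_eq_zero_of_eventually_norm_eq {E : Type*} [NormedAddCommGroup E]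
    [InnerProductSpace ℝ E] {f : ℝ → E} {f' : E} {x c : ℝ} (hf : HasDerivAt f f' x)
    (hc : ∀ᶠ y in 𝓝 x, ‖f y‖ = c) : ⟪f x, f'⟫ = 0 := by
  have hconst : HasDerivAt (‖f ·‖ ^ 2) 0 x :=
    (hasDerivAt_const x (c ^ 2)).congr_of_eventuallyEq (hc.mono fun y hy => by simp only [hy])
  linarith [hf.norm_sq.unique hconst]

theorem HasDerivAt.inner_comp_sub_comp {E : Type*} [NormedAddCommGroup E]
    [InnerProductSpace ℝ E] {N γ p : ℝ → E} {σ : ℝ → ℝ} {N' γ' v : E} {σ' t : ℝ}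
    (hN : HasDerivAt N N' (σ t)) (hγ : HasDerivAt γ γ' (σ t)) (hp : HasDerivAt p v t)
    (hσ : HasDerivAt σ σ' t) :
    HasDerivAt (fun t => ⟪N (σ t), p t - γ (σ t)⟫)
      (⟪N (σ t), v⟫ - σ' * ⟪N (σ t), γ'⟫ + σ' * ⟪N', p t - γ (σ t)⟫) t := by
  refine ((hN.scomp t hσ).inner ℝ (hp.sub (hγ.scomp t hσ))).congr_deriv ?_
  rw [inner_sub_right, real_inner_smul_right, real_inner_smul_left]
  rfl

-- Parseval's identity for the orthonormal basis `a, c, a × c`.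
theorem inner_eq_sum_inner_mul_inner_cross3 {a c : EuclideanSpace ℝ (Fin 3)}
    (ha : ‖a‖ = 1) (hc : ‖c‖ = 1) (hac : ⟪a, c⟫ = 0) (m u : EuclideanSpace ℝ (Fin 3)) :
    ⟪m, u⟫ = ⟪a, m⟫ * ⟪a, u⟫ + ⟪c, m⟫ * ⟪c, u⟫ + ⟪cross3 a c, m⟫ * ⟪cross3 a c, u⟫ := by
  have ha' : ⟪a, a⟫ = 1 := by rw [real_inner_self_eq_norm_sq, ha, one_pow]
  have hc' : ⟪c, c⟫ = 1 := by rw [real_inner_self_eq_norm_sq, hc, one_pow]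
  simp only [cross3, PiLp.inner_apply, RCLike.inner_apply, conj_trivial,
    Fin.sum_univ_three, WithLp.equiv_symm_apply, Matrix.cons_val_zero,
    Matrix.cons_val_one, Matrix.head_cons, Matrix.cons_val_two, Matrix.tail_cons] at ha' hc' hac ⊢
  linear_combination
    ((c 0*m 0+c 1*m 1+c 2*m 2)*(c 0*u 0+c 1*u 1+c 2*u 2) - (m 0*u 0+m 1*u 1+m 2*u 2)) * ha' +
    ((a 0*m 0+a 1*m 1+a 2*m 2)*(a 0*u 0+a 1*u 1+a 2*u 2)
      - (a 0*a 0+a 1*a 1+a 2*a 2)*(m 0*u 0+m 1*u 1+m 2*u 2)) * hc' +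
    ((a 0*c 0+a 1*c 1+a 2*c 2)*(m 0*u 0+m 1*u 1+m 2*u 2)
      - (a 0*m 0+a 1*m 1+a 2*m 2)*(c 0*u 0+c 1*u 1+c 2*u 2)
      - (c 0*m 0+c 1*m 1+c 2*m 2)*(a 0*u 0+a 1*u 1+a 2*u 2)) * hac

theorem norm_nor_eq_one {p_f : ℝ → EuclideanSpace ℝ (Fin 3)} {s : ℝ} (h : curv p_f s ≠ 0) :
    ‖nor p_f s‖ = 1 := by
  rw [nor, norm_smul, norm_inv, curv, norm_norm]
  exact inv_mul_cancel₀ h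

theorem inner_tang_nor_eq_zero {p_f : ℝ → EuclideanSpace ℝ (Fin 3)} {s : ℝ}
    (hunit : ∀ s, ‖deriv p_f s‖ = 1) (hd : DifferentiableAt ℝ (deriv p_f) s) :
    ⟪tang p_f s, nor p_f s⟫ = 0 := by
  rw [tang, nor, real_inner_smul_right,
    hd.hasDerivAt.inner_eq_zero_of_eventually_norm_eq (.of_forall hunit), mul_zero]

theorem transverse_coordinate_w1_dynamics
    (p_f p : ℝ → EuclideanSpace ℝ (Fin 3)) (s_f : ℝ → ℝ) (t₀ : ℝ)
    (hd1 : ∀ᶠ s in nhds (s_f t₀), DifferentiableAt ℝ p_f s)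
    (hd2 : ∀ᶠ s in nhds (s_f t₀), DifferentiableAt ℝ (deriv p_f) s)
    (hunit : ∀ s : ℝ, ‖deriv p_f s‖ = 1)
    (hk : ∀ᶠ s in nhds (s_f t₀), curv p_f s ≠ 0)
    (hn : DifferentiableAt ℝ (nor p_f) (s_f t₀))
    (hp : DifferentiableAt ℝ p t₀)
    (hsf : DifferentiableAt ℝ s_f t₀)
    (htrans : ∀ᶠ t in nhds t₀, ⟪tang p_f (s_f t), p t - p_f (s_f t)⟫ = 0) :
    DifferentiableAt ℝ (w1 p_f p s_f) t₀ ∧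
      deriv (w1 p_f p s_f) t₀ =
        ⟪nor p_f (s_f t₀), deriv p t₀⟫ +
          tors p_f (s_f t₀) * deriv s_f t₀ * w2 p_f p s_f t₀ := by
  set s₀ := s_f t₀
  have hTN : ⟪tang p_f s₀, nor p_f s₀⟫ = 0 := inner_tang_nor_eq_zero hunit hd2.self_of_nhds
  have hNN' : ⟪nor p_f s₀, deriv (nor p_f) s₀⟫ = 0 :=
    hn.hasDerivAt.inner_eq_zero_of_eventually_norm_eq (hk.mono fun _ => norm_nor_eq_one)
  have hframe := inner_eq_sum_inner_mul_inner_cross3 (hunit s₀)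
    (norm_nor_eq_one hk.self_of_nhds) hTN (deriv (nor p_f) s₀) (p t₀ - p_f s₀)
  have hw1 : HasDerivAt (w1 p_f p s_f) _ t₀ :=
    hn.hasDerivAt.inner_comp_sub_comp hd1.self_of_nhds.hasDerivAt hp.hasDerivAt hsf.hasDerivAt
  refine ⟨hw1.differentiableAt, hw1.deriv.trans ?_⟩
  have hTu : ⟪deriv p_f s₀, p t₀ - p_f s₀⟫ = 0 := htrans.self_of_nhds
  rw [tang, real_inner_comm] at hTN
  rw [tors, w2, binor, tang, hTN, hframe, hTu, hNN']
  ring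
end
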